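/- arXiv:1607.06281 — 2 statements merged into one kernel-verified Lean document; each statement's English description precedes it below -/
import Mathlib

section
/- Every ℝ-linear isometric automorphism of ℍ with determinant 1 (i.e., every element of SO(4) acting on ℍ ≅ ℝ⁴) is of the form Φ_{p,q} : h ↦ p·h·q⁻¹ for some unit quaternions p and q; in other words, the homomorphism Φ : S³ × S³ → SO(4) is surjective. -/
open Quaternion RealInnerProductSpace

noncomputable section

private def conjL : ℍ[ℝ] →ₗ[ℝ] ℍ[ℝ] where
  toFun := star
  map_add' := star_add
  map_smul' r x := by simp

private def bq : Module.Basis (Fin 4) ℝ ℍ[ℝ] := QuaternionAlgebra.basisOneIJK (-1 : ℝ) 0 (-1)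

private lemma bq_apply (j : Fin 4) :
    bq j = (QuaternionAlgebra.linearEquivTuple (-1:ℝ) 0 (-1)).symm (Pi.single j 1) :=
  congrFun (Module.Basis.coe_ofEquivFun (R := ℝ) (M := ℍ[ℝ,-1,0,-1]) _) j

private lemma bq0 : bq 0 = ⟨1,0,0,0⟩ := by rw [bq_apply]; rfl
private lemma bq1 : bq 1 = ⟨0,1,0,0⟩ := by rw [bq_apply]; rfl
private lemma bq2 : bq 2 = ⟨0,0,1,0⟩ := by rw [bq_apply]; rfl
private lemma bq3 : bq 3 = ⟨0,0,0,1⟩ := by rw [bq_apply]; rfl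

private lemma bq_repr (x : ℍ[ℝ]) : ⇑(bq.repr x) = ![x.re, x.imI, x.imJ, x.imK] :=
  QuaternionAlgebra.coe_basisOneIJK_repr (R := ℝ) _ _ _ x

private lemma det_conjL : LinearMap.det conjL = -1 := by
  have h : LinearMap.toMatrix bq bq conjL = !![1,0,0,0; 0,-1,0,0; 0,0,-1,0; 0,0,0,-1] := by
    ext i j
    fin_cases j <;> rw [LinearMap.toMatrix_apply] <;>
      simp [bq_repr, conjL] <;> simp [bq0, bq1, bq2, bq3] <;> fin_cases i <;> rfl
  rw [← LinearMap.det_toMatrix bq conjL, h]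
  simp [Matrix.det_succ_row_zero, Fin.sum_univ_succ, Fin.succAbove]

private lemma det_mulLeft (p : ℍ[ℝ]) : LinearMap.det (LinearMap.mulLeft ℝ p) = normSq p ^ 2 := by
  have h : LinearMap.toMatrix bq bq (LinearMap.mulLeft ℝ p) =
      !![p.re, -p.imI, -p.imJ, -p.imK;
         p.imI, p.re, -p.imK, p.imJ;
         p.imJ, p.imK, p.re, -p.imI;
         p.imK, -p.imJ, p.imI, p.re] := by
    ext i j
    fin_cases j <;> rw [LinearMap.toMatrix_apply] <;>
      simp [bq_repr, Quaternion.re_mul, Quaternion.imI_mul,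
        Quaternion.imJ_mul, Quaternion.imK_mul] <;> simp [bq0, bq1, bq2, bq3] <;> fin_cases i <;> simp
  rw [← LinearMap.det_toMatrix bq _, h]
  simp [Matrix.det_succ_row_zero, Fin.sum_univ_succ, Fin.succAbove, Quaternion.normSq_def']
  ring

private lemma det_mulRight (q : ℍ[ℝ]) : LinearMap.det (LinearMap.mulRight ℝ q) = normSq q ^ 2 := by
  have h : LinearMap.toMatrix bq bq (LinearMap.mulRight ℝ q) =
      !![q.re, -q.imI, -q.imJ, -q.imK;
         q.imI, q.re, q.imK, -q.imJ;
         q.imJ, -q.imK, q.re, q.imI;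
         q.imK, q.imJ, -q.imI, q.re] := by
    ext i j
    fin_cases j <;> rw [LinearMap.toMatrix_apply] <;>
      simp [bq_repr, Quaternion.re_mul, Quaternion.imI_mul,
        Quaternion.imJ_mul, Quaternion.imK_mul] <;> simp [bq0, bq1, bq2, bq3] <;> fin_cases i <;> simp
  rw [← LinearMap.det_toMatrix bq _, h]
  simp [Matrix.det_succ_row_zero, Fin.sum_univ_succ, Fin.succAbove, Quaternion.normSq_def']
  ring

private lemma quat_key (v x : ℍ[ℝ]) :
    v * star x * v = (2 * (x * star v).re) • v - normSq v • x := by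
  ext <;> simp [Quaternion.re_mul, Quaternion.imI_mul, Quaternion.imJ_mul, Quaternion.imK_mul,
    Quaternion.normSq_def'] <;> ring

private lemma refl_formula (v : ℍ[ℝ]) (hv : v ≠ 0) (x : ℍ[ℝ]) :
    Submodule.reflection (ℝ ∙ v)ᗮ x = (-(‖v‖⁻¹ • v)) * star x * (‖v‖⁻¹ • v) := by
  have hn : normSq v ≠ 0 := by simpa using hv
  have hnv : ‖v‖ ≠ 0 := norm_ne_zero_iff.mpr hv
  have hre : ⟪v, x⟫ = (x * star v).re := by
    rw [Quaternion.inner_def, ← Quaternion.re_star (v * star x)]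
    simp [mul_comm]
  have hcc : ‖v‖⁻¹ * ‖v‖⁻¹ = (normSq v)⁻¹ := by
    rw [← mul_inv, ← normSq_eq_norm_mul_self]
  have hrhs : (-(‖v‖⁻¹ • v)) * star x * (‖v‖⁻¹ • v)
      = -((normSq v)⁻¹ • (v * star x * v)) := by
    rw [← hcc, ← smul_neg, ← smul_smul]
    simp only [neg_mul, smul_mul_assoc, mul_smul_comm, smul_neg]
  have hsq : ((‖v‖:ℝ)^2 : ℝ) = normSq v := by
    rw [sq, ← normSq_eq_norm_mul_self]
  rw [Submodule.reflection_orthogonal_apply, Submodule.reflection_singleton_apply, hrhs, quat_key, hre]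
  norm_cast
  rw [hsq]
  match_scalars <;> field_simp <;> simp [hn]

/-- Every `ℝ`-linear isometric automorphism of `ℍ` with determinant `1` (i.e. every element
of `SO(4)`) is of the form `h ↦ p·h·q⁻¹` for some unit quaternions `p` and `q`:
the homomorphism `Φ : S³ × S³ → SO(4)` is surjective. -/
theorem phi_surjective (e : ℍ[ℝ] ≃ₗᵢ[ℝ] ℍ[ℝ])
    (hdet : LinearMap.det (e.toLinearEquiv : ℍ[ℝ] →ₗ[ℝ] ℍ[ℝ]) = 1) :
    ∃ p q : ℍ[ℝ], ‖p‖ = 1 ∧ ‖q‖ = 1 ∧ ∀ h : ℍ[ℝ], e h = p * h * q⁻¹ := by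
  obtain ⟨l, -, hl⟩ := e.reflections_generate_dim
  have main : ∀ l : List ℍ[ℝ],
      (∃ p q : ℍ[ℝ], ‖p‖ = 1 ∧ ‖q‖ = 1 ∧
        ∀ x, (l.map fun v => Submodule.reflection (ℝ ∙ v)ᗮ).prod x = p * x * q) ∨
      (∃ p q : ℍ[ℝ], ‖p‖ = 1 ∧ ‖q‖ = 1 ∧
        ∀ x, (l.map fun v => Submodule.reflection (ℝ ∙ v)ᗮ).prod x = p * star x * q) := by
    intro l
    induction l with
    | nil =>
      left
      exact ⟨1, 1, norm_one, norm_one, fun x => by simp⟩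
    | cons v l ih =>
      have hcons : ∀ x, ((v :: l).map fun w => Submodule.reflection (ℝ ∙ w)ᗮ).prod x
          = Submodule.reflection (ℝ ∙ v)ᗮ ((l.map fun w => Submodule.reflection (ℝ ∙ w)ᗮ).prod x) := by
        intro x
        simp [List.prod_cons]
      by_cases hv : v = 0
      · subst hv
        have hz : ∀ y : ℍ[ℝ], Submodule.reflection (ℝ ∙ (0:ℍ[ℝ]))ᗮ y = y := by
          intro y
          apply Submodule.reflection_mem_subspace_eq_self
          simp [Submodule.span_zero_singleton]
        rcases ih with ⟨p, q, hp, hq, hf⟩ | ⟨p, q, hp, hq, hf⟩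
        · exact Or.inl ⟨p, q, hp, hq, fun x => by rw [hcons, hz, hf]⟩
        · exact Or.inr ⟨p, q, hp, hq, fun x => by rw [hcons, hz, hf]⟩
      · set u : ℍ[ℝ] := ‖v‖⁻¹ • v with hu_def
        have hvnorm : ‖v‖ ≠ 0 := norm_ne_zero_iff.mpr hv
        have hu : ‖u‖ = 1 := by
          rw [hu_def, norm_smul, norm_inv, norm_norm, inv_mul_cancel₀ hvnorm]
        have hrefl : ∀ y, Submodule.reflection (ℝ ∙ v)ᗮ y = (-u) * star y * u := fun y =>
          refl_formula v hv y
        rcases ih with ⟨p, q, hp, hq, hf⟩ | ⟨p, q, hp, hq, hf⟩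
        · right
          refine ⟨(-u) * star q, star p * u, ?_, ?_, fun x => ?_⟩
          · rw [norm_mul, norm_neg, hu, Quaternion.norm_star, hq]; ring
          · rw [norm_mul, Quaternion.norm_star, hp, hu]; ring
          · rw [hcons, hf, hrefl]
            simp only [star_mul, star_star]
            noncomm_ring
        · left
          refine ⟨(-u) * star q, star p * u, ?_, ?_, fun x => ?_⟩
          · rw [norm_mul, norm_neg, hu, Quaternion.norm_star, hq]; ring
          · rw [norm_mul, Quaternion.norm_star, hp, hu]; ring
          · rw [hcons, hf, hrefl]
            simp only [star_mul, star_star]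
            noncomm_ring
  rcases main l with ⟨p, q, hp, hq, hf⟩ | ⟨p, q, hp, hq, hf⟩
  · -- rotation case
    have hq' : normSq q = 1 := by rw [normSq_eq_norm_mul_self, hq]; norm_num
    refine ⟨p, star q, hp, by rw [Quaternion.norm_star]; exact hq, fun h => ?_⟩
    have hmul : star q * q = 1 := by
      rw [Quaternion.star_mul_self, hq']
      norm_num
    have hinv : (star q)⁻¹ = q := inv_eq_of_mul_eq_one_right hmul
    rw [hinv, ← hf h, hl]
  · -- anti-rotation case: contradicts det = 1
    exfalso
    have hp' : normSq p = 1 := by rw [normSq_eq_norm_mul_self, hp]; norm_num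
    have hq' : normSq q = 1 := by rw [normSq_eq_norm_mul_self, hq]; norm_num
    have hcomp : (e.toLinearEquiv : ℍ[ℝ] →ₗ[ℝ] ℍ[ℝ]) =
        (LinearMap.mulRight ℝ q).comp ((LinearMap.mulLeft ℝ p).comp conjL) := by
      apply LinearMap.ext
      intro x
      have := hf x
      rw [← hl] at this
      simpa [conjL, LinearMap.mulLeft_apply, LinearMap.mulRight_apply] using this
    rw [hcomp, LinearMap.det_comp, LinearMap.det_comp, det_mulLeft, det_mulRight, det_conjL,
      hp', hq'] at hdet
    norm_num at hdet
end
end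

section
/- For every integer n ≥ 3, the normalizer in the group S³ of unit quaternions of the cyclic subgroup C_n generated by cos(2π/n) + sin(2π/n)·i is exactly O(2)* = S¹ ∪ S¹·j. -/
open Quaternion

noncomputable section

/-- The group `S³` of unit quaternions. -/
abbrev S3 : Type := Metric.sphere (0 : Quaternion ℝ) 1

theorem norm_one_of {q : ℍ[ℝ]} (h : Quaternion.normSq q = 1) : ‖q‖ = 1 := by
  have h2 : ‖q‖ * ‖q‖ = 1 := by rw [← Quaternion.normSq_eq_norm_mul_self, h]
  rcases mul_self_eq_one_iff.mp h2 with h | h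
  · exact h
  · nlinarith [norm_nonneg q]

/-- The unit quaternion `a + b·i + c·j + d·k`. -/
def mkS (a b c d : ℝ) (h : a ^ 2 + b ^ 2 + c ^ 2 + d ^ 2 = 1) : S3 :=
  ⟨⟨a, b, c, d⟩, by
    exact mem_sphere_zero_iff_norm.mpr (norm_one_of (q := ⟨a, b, c, d⟩) ((Quaternion.normSq_def' _).trans h))⟩

/-- The unit quaternion `cos θ + sin θ · i`. -/
def eS (θ : ℝ) : S3 :=
  mkS (Real.cos θ) (Real.sin θ) 0 0 (by
    have := Real.cos_sq_add_sin_sq θ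
    nlinarith)

/-- The unit quaternion `i`. -/
def iS : S3 := mkS 0 1 0 0 (by norm_num)

/-- The unit quaternion `j`. -/
def jS : S3 := mkS 0 0 1 0 (by norm_num)

/-- The generator `cos(2π/n) + sin(2π/n)·i` of the cyclic group `C_n`. -/
def Cgen (n : ℕ) : S3 := eS (2 * Real.pi / n)

/-- The set `S¹` of unit quaternions of the form `a + b·i`. -/
def circSet : Set S3 := {q : S3 | (q : ℍ[ℝ]).imJ = 0 ∧ (q : ℍ[ℝ]).imK = 0}

/-- The set `O(2)* = S¹ ∪ S¹·j`. -/
def O2Set : Set S3 := circSet ∪ (fun z => z * jS) '' circSet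

-- AUX
lemma coe_eS (θ : ℝ) : (eS θ : ℍ[ℝ]) = ⟨Real.cos θ, Real.sin θ, 0, 0⟩ := rfl
lemma coe_jS : (jS : ℍ[ℝ]) = ⟨0, 0, 1, 0⟩ := rfl

lemma eS_zero : eS 0 = 1 := by
  apply Subtype.ext
  rw [Metric.unitSphere.coe_one, coe_eS]
  ext <;> simp

lemma eS_mul (α β : ℝ) : eS α * eS β = eS (α + β) := by
  apply Subtype.ext
  rw [Metric.unitSphere.coe_mul]
  ext <;>
    simp only [Quaternion.re_mul, Quaternion.imI_mul, Quaternion.imJ_mul, Quaternion.imK_mul] <;>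
    simp [coe_eS,
      Real.cos_add, Real.sin_add] <;> ring

lemma eS_inv (θ : ℝ) : (eS θ)⁻¹ = eS (-θ) := by
  apply inv_eq_of_mul_eq_one_right
  rw [eS_mul, add_neg_cancel, eS_zero]

lemma eS_pow (θ : ℝ) (m : ℕ) : (eS θ) ^ m = eS (m * θ) := by
  induction m with
  | zero => simpa using eS_zero.symm
  | succ k ih =>
    rw [pow_succ, ih, eS_mul]
    push_cast
    ring_nf

lemma eS_zpow (θ : ℝ) (m : ℤ) : (eS θ) ^ m = eS (m * θ) := by
  rcases m.eq_nat_or_neg with ⟨k, rfl | rfl⟩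
  · rw [zpow_natCast, eS_pow]; push_cast; ring_nf
  · rw [zpow_neg, zpow_natCast, eS_pow, eS_inv]
    push_cast; ring_nf

lemma circ_comm {p q : ℍ[ℝ]} (h1 : p.imJ = 0) (h2 : p.imK = 0) (h3 : q.imJ = 0)
    (h4 : q.imK = 0) : p * q = q * p := by
  ext <;>
    simp [Quaternion.re_mul, Quaternion.imI_mul, Quaternion.imJ_mul, Quaternion.imK_mul,
      h1, h2, h3, h4] <;> ring

lemma conj_zpow'' {G : Type*} [Group G] (a b : G) (m : ℤ) :
    a * b ^ m * a⁻¹ = (a * b * a⁻¹) ^ m := by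
  simpa using (map_zpow (MulAut.conj a) b m).symm

lemma inv_conj_of_conj {G : Type*} [Group G] {g q : G} (h : q * g * q⁻¹ = g⁻¹) :
    q⁻¹ * g * q = g⁻¹ := by
  have hc : q * g = g⁻¹ * q := mul_inv_eq_iff_eq_mul.mp h
  have h4 : g * (q * g) = q := by rw [hc, mul_inv_cancel_left]
  have h5 : g * q = q * g⁻¹ := by
    rw [eq_mul_inv_iff_mul_eq, mul_assoc]; exact h4
  rw [mul_assoc, h5, inv_mul_cancel_left]

lemma coe_mkS (a b c d : ℝ) (h : a ^ 2 + b ^ 2 + c ^ 2 + d ^ 2 = 1) :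
    (mkS a b c d h : ℍ[ℝ]) = ⟨a, b, c, d⟩ := rfl

lemma alg_cases {a b c d c0 s C S : ℝ} (hs : s ≠ 0)
    (hnorm : a ^ 2 + b ^ 2 + c ^ 2 + d ^ 2 = 1)
    (e1 : a * c0 - b * s = C * a - S * b)
    (e2 : a * s + b * c0 = C * b + S * a)
    (e3 : c * c0 + d * s = C * c - S * d)
    (e4 : d * c0 - c * s = C * d + S * c) :
    (c = 0 ∧ d = 0) ∨ (a = 0 ∧ b = 0) := by
  by_cases h5 : (c0 - C) ^ 2 + (s - S) ^ 2 = 0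
  · have hC : C = c0 := by nlinarith [sq_nonneg (c0 - C), sq_nonneg (s - S)]
    have hS : S = s := by nlinarith [sq_nonneg (c0 - C), sq_nonneg (s - S)]
    rw [hC, hS] at e3 e4
    have hd : d = 0 := by
      have h2 : s * d = 0 := by linear_combination e3 / 2
      exact (mul_eq_zero.mp h2).resolve_left hs
    have hc : c = 0 := by
      have h2 : s * c = 0 := by linear_combination (-e4) / 2
      exact (mul_eq_zero.mp h2).resolve_left hs
    exact Or.inl ⟨hc, hd⟩
  · have hA : ((c0 - C) ^ 2 + (s - S) ^ 2) * a = 0 := by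
      linear_combination (c0 - C) * e1 + (s - S) * e2
    have hB : ((c0 - C) ^ 2 + (s - S) ^ 2) * b = 0 := by
      linear_combination (-(s - S)) * e1 + (c0 - C) * e2
    exact Or.inr ⟨(mul_eq_zero.mp hA).resolve_left h5, (mul_eq_zero.mp hB).resolve_left h5⟩

lemma mem_norm {G : Type*} [Group G] {g q : G}
    (h : q * g * q⁻¹ = g ∨ q * g * q⁻¹ = g⁻¹) :
    q ∈ Subgroup.normalizer ((Subgroup.zpowers g : Subgroup G) : Set G) := by
  have h' : q⁻¹ * g * q = g ∨ q⁻¹ * g * q = g⁻¹ := by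
    rcases h with h | h
    · left
      have hc : q * g = g * q := mul_inv_eq_iff_eq_mul.mp h
      rw [mul_assoc, ← hc, inv_mul_cancel_left]
    · right; exact inv_conj_of_conj h
  rw [Subgroup.mem_normalizer_iff]
  intro x
  constructor
  · intro hx
    obtain ⟨m, hm⟩ := Subgroup.mem_zpowers_iff.mp hx
    rw [← hm]
    rcases h with h | h
    · exact Subgroup.mem_zpowers_iff.mpr ⟨m, by rw [conj_zpow'', h]⟩
    · exact Subgroup.mem_zpowers_iff.mpr ⟨-m, by rw [conj_zpow'', h, inv_zpow, ← zpow_neg]⟩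
  · intro hx
    obtain ⟨m, hm⟩ := Subgroup.mem_zpowers_iff.mp hx
    have hxx : x = q⁻¹ * g ^ m * q := by
      rw [hm]; group
    have hcq : q⁻¹ * g ^ m * q = (q⁻¹ * g * q) ^ m := by
      have := conj_zpow'' q⁻¹ g m
      simpa using this
    rcases h' with h' | h'
    · exact Subgroup.mem_zpowers_iff.mpr ⟨m, by rw [hxx, hcq, h']⟩
    · exact Subgroup.mem_zpowers_iff.mpr ⟨-m, by rw [hxx, hcq, h', inv_zpow, ← zpow_neg]⟩

/-- For `n ≥ 3`, the normalizer in `S³` of the cyclic group `C_n` generated by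
`cos(2π/n) + sin(2π/n)·i` is exactly `O(2)* = S¹ ∪ S¹·j`. -/
theorem normalizer_cyclic (n : ℕ) (hn : 3 ≤ n) :
    (Subgroup.normalizer ((Subgroup.zpowers (Cgen n) : Subgroup S3) : Set S3) : Set S3) = O2Set := by
  set θ : ℝ := 2 * Real.pi / n with hθ
  have hn0 : (0:ℝ) < n := by positivity
  have hθpos : 0 < θ := by positivity
  have hθlt : θ < Real.pi := by
    rw [hθ, div_lt_iff₀ hn0]
    have : (3:ℝ) ≤ n := by exact_mod_cast hn
    nlinarith [Real.pi_pos]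
  have hs : Real.sin θ ≠ 0 := ne_of_gt (Real.sin_pos_of_pos_of_lt_pi hθpos hθlt)
  have hCgen : Cgen n = eS θ := rfl
  ext q
  constructor
  · intro hq
    have h1 : q * Cgen n * q⁻¹ ∈ Subgroup.zpowers (Cgen n) :=
      (Subgroup.mem_normalizer_iff.mp hq (Cgen n)).mp (Subgroup.mem_zpowers _)
    obtain ⟨m, hm⟩ := Subgroup.mem_zpowers_iff.mp h1
    have hqg : q * Cgen n = (Cgen n) ^ m * q := by rw [hm, inv_mul_cancel_right]
    have hq2 : (↑(q * Cgen n) : ℍ[ℝ]) = ↑((Cgen n) ^ m * q) := by rw [hqg]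
    rw [Metric.unitSphere.coe_mul, Metric.unitSphere.coe_mul, hCgen, eS_zpow,
      Quaternion.ext_iff] at hq2
    obtain ⟨e1, e2, e3, e4⟩ := hq2
    simp only [Quaternion.re_mul, Quaternion.imI_mul, Quaternion.imJ_mul,
      Quaternion.imK_mul] at e1 e2 e3 e4
    simp only [coe_eS] at e1 e2 e3 e4
    have hnorm : (q : ℍ[ℝ]).re ^ 2 + (q : ℍ[ℝ]).imI ^ 2 + (q : ℍ[ℝ]).imJ ^ 2
        + (q : ℍ[ℝ]).imK ^ 2 = 1 := by
      have h := mem_sphere_zero_iff_norm.mp q.2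
      have h2 : Quaternion.normSq (q : ℍ[ℝ]) = 1 := by
        rw [Quaternion.normSq_eq_norm_mul_self, h]; norm_num
      rw [Quaternion.normSq_def'] at h2
      exact h2
    have E1 : (q : ℍ[ℝ]).re * Real.cos θ - (q : ℍ[ℝ]).imI * Real.sin θ
        = Real.cos ((m : ℝ) * θ) * (q : ℍ[ℝ]).re - Real.sin ((m : ℝ) * θ) * (q : ℍ[ℝ]).imI := by
      linear_combination e1
    have E2 : (q : ℍ[ℝ]).re * Real.sin θ + (q : ℍ[ℝ]).imI * Real.cos θ
        = Real.cos ((m : ℝ) * θ) * (q : ℍ[ℝ]).imI + Real.sin ((m : ℝ) * θ) * (q : ℍ[ℝ]).re := by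
      linear_combination e2
    have E3 : (q : ℍ[ℝ]).imJ * Real.cos θ + (q : ℍ[ℝ]).imK * Real.sin θ
        = Real.cos ((m : ℝ) * θ) * (q : ℍ[ℝ]).imJ - Real.sin ((m : ℝ) * θ) * (q : ℍ[ℝ]).imK := by
      linear_combination e3
    have E4 : (q : ℍ[ℝ]).imK * Real.cos θ - (q : ℍ[ℝ]).imJ * Real.sin θ
        = Real.cos ((m : ℝ) * θ) * (q : ℍ[ℝ]).imK + Real.sin ((m : ℝ) * θ) * (q : ℍ[ℝ]).imJ := by
      linear_combination e4
    rcases alg_cases hs hnorm E1 E2 E3 E4 with ⟨hc, hd⟩ | ⟨ha, hb⟩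
    · exact Or.inl ⟨hc, hd⟩
    · have hcd : (q : ℍ[ℝ]).imJ ^ 2 + (q : ℍ[ℝ]).imK ^ 2 + 0 ^ 2 + 0 ^ 2 = 1 := by
        nlinarith
      refine Or.inr ⟨mkS ((q : ℍ[ℝ]).imJ) ((q : ℍ[ℝ]).imK) 0 0 hcd, ⟨rfl, rfl⟩, ?_⟩
      apply Subtype.ext
      rw [Metric.unitSphere.coe_mul, Quaternion.ext_iff]
      refine ⟨?_, ?_, ?_, ?_⟩ <;>
        simp only [Quaternion.re_mul, Quaternion.imI_mul, Quaternion.imJ_mul,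
          Quaternion.imK_mul] <;>
        simp [coe_mkS, coe_jS, ha, hb]
  · intro hq
    rcases hq with hq | ⟨z, hz, rfl⟩
    · apply mem_norm
      left
      rw [mul_inv_eq_iff_eq_mul]
      apply Subtype.ext
      rw [Metric.unitSphere.coe_mul, Metric.unitSphere.coe_mul]
      exact circ_comm hq.1 hq.2 rfl rfl
    · apply mem_norm
      right
      have h1 : jS * Cgen n = eS (-θ) * jS := by
        apply Subtype.ext
        rw [Metric.unitSphere.coe_mul, Metric.unitSphere.coe_mul, hCgen]
        ext <;>
          simp only [Quaternion.re_mul, Quaternion.imI_mul, Quaternion.imJ_mul,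
            Quaternion.imK_mul] <;>
          simp [coe_eS, coe_jS] <;> ring
      have h2 : z * eS (-θ) = eS (-θ) * z := by
        apply Subtype.ext
        rw [Metric.unitSphere.coe_mul, Metric.unitSphere.coe_mul]
        exact circ_comm hz.1 hz.2 rfl rfl
      have h3 : z * jS * Cgen n = eS (-θ) * (z * jS) := by
        rw [mul_assoc, h1, ← mul_assoc, h2, mul_assoc]
      rw [h3, mul_inv_cancel_right, hCgen, eS_inv]
end
end
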